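/- Let R be a (possibly noncommutative) ring, q a central unit of R, and x, y, A, B ∈ R such that A is central, AB = BA, x y = A - B, x B = q^2 B x and B y = q^2 y B. Then for every nonnegative integer k, x^k y^k = ∏_{j=0}^{k-1} (A - q^{2j} B). -/
import Mathlib


/-- Abstract form of formula (16): if `xy = A - B` with `A` central, `AB = BA`,
`xB = q^2 Bx` and `By = q^2 yB` (`q` a central unit), then
`x^k y^k = ∏_{j=0}^{k-1} (A - q^{2j} B)`. -/
theorem pow_mul_pow_eq_prod {R : Type*} [Ring R] (q : R) (hqc : ∀ r : R, q * r = r * q)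
    (hqu : IsUnit q) (x y A B : R) (hA : ∀ r : R, A * r = r * A) (hAB : A * B = B * A)
    (hxy : x * y = A - B) (hxB : x * B = q ^ 2 * B * x) (hBy : B * y = q ^ 2 * y * B)
    (k : ℕ) :
    x ^ k * y ^ k = ((List.range k).map (fun j => A - q ^ (2 * j) * B)).prod := by
  have hQ : ∀ (n : ℕ) (r : R), q ^ n * r = r * q ^ n := fun n r =>
    (Commute.pow_left (hqc r) n)
  -- B moves past powers of y
  have hBy' : ∀ n : ℕ, B * y ^ n = q ^ (2 * n) * y ^ n * B := by
    intro n
    induction n with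
    | zero => simp
    | succ n ih =>
      calc B * y ^ (n+1) = q ^ 2 * (y * (B * y ^ n)) := by
            rw [pow_succ', ← mul_assoc, hBy, mul_assoc, mul_assoc]
        _ = q ^ 2 * (y * (q ^ (2*n) * y ^ n * B)) := by rw [ih]
        _ = q ^ 2 * (q ^ (2*n) * (y * (y ^ n * B))) := by
            rw [← mul_assoc y, ← mul_assoc y, ← hQ (2*n) y, mul_assoc, mul_assoc]
        _ = q ^ (2*(n+1)) * y ^ (n+1) * B := by
            rw [← mul_assoc, ← pow_add, pow_succ' y n]
            have e : 2 + 2*n = 2*(n+1) := by omega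
            rw [e, mul_assoc, mul_assoc]
  induction k with
  | zero => simp
  | succ k ih =>
    set P := ((List.range k).map (fun j => A - q ^ (2 * j) * B)).prod with hP
    have h2 : x ^ k * (B * y ^ k) = q ^ (2*k) * (x ^ k * y ^ k) * B := by
      rw [hBy' k, ← mul_assoc, ← mul_assoc, ← hQ (2*k) (x ^ k), mul_assoc (q ^ (2*k))]
    calc x ^ (k+1) * y ^ (k+1)
        = x ^ k * (x * y) * y ^ k := by
          rw [pow_succ, pow_succ', mul_assoc, ← mul_assoc x y, ← mul_assoc]
      _ = x ^ k * A * y ^ k - x ^ k * (B * y ^ k) := by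
          rw [hxy, mul_sub, sub_mul, mul_assoc (x ^ k) B]
      _ = A * (x ^ k * y ^ k) - q ^ (2*k) * (x ^ k * y ^ k) * B := by
          rw [h2, ← hA (x ^ k), mul_assoc]
      _ = A * P - q ^ (2*k) * P * B := by rw [ih]
      _ = P * (A - q ^ (2*k) * B) := by
          rw [hA P, hQ (2*k) P, mul_assoc, ← mul_sub]
      _ = ((List.range (k+1)).map (fun j => A - q ^ (2 * j) * B)).prod := by
          rw [List.range_succ, List.map_append, List.prod_append]
          simp [hP]
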